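/- arXiv:1305.0509 — 4 statements merged into one kernel-verified Lean document; each statement's English description precedes it below -/
import Mathlib

section
/- Let b ∈ (0,1). Then there exists a constant c(b) > 0 depending only on b such that for every t > 0 and all x, η ∈ ℝ, one has (∫_ℝ |exp(i t η² x) − exp(i t η² y)|² / |x − y|^{1+2b} dy)^{1/2} ≤ c(b) · η^{2b} · t^{b} (where η^{2b} denotes (η²)^{b}). -/
/-!
With `a = t η²`, the integrand only depends on `u = x - y` and equals
`|e^{iau} - 1|² / |u|^{1+2b}`, and the substitution `v = a u` pulls out the factor `a^{2b}`.
The remaining integral is finite since `|e^{iv} - 1| ≤ min (|v|, 2)`: this gives the majorant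
`|v|^{1-2b}` near `0` and `4 |v|^{-1-2b}` near infinity, of total integral `1/(1-b) + 4/b`.
-/

open MeasureTheory Set

noncomputable def steinDerivative (b : ℝ) (f : ℝ → ℂ) (x : ℝ) : ℝ :=
  (∫ y, ‖f x - f y‖ ^ 2 / |x - y| ^ (1 + 2 * b)) ^ ((1 : ℝ) / 2)

theorem integrable_comp_abs {f : ℝ → ℝ} (hf : IntegrableOn f (Ioi 0)) :
    Integrable fun x ↦ f |x| := by
  have hIoi : IntegrableOn (fun x ↦ f |x|) (Ioi 0) :=
    hf.congr_fun (fun x hx ↦ by rw [abs_of_pos hx]) measurableSet_Ioi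
  have hIic : IntegrableOn (fun x ↦ f |x|) (Iic 0) := by
    rw [← Measure.map_neg_eq_self (volume : Measure ℝ),
      (measurableEmbedding_neg (α := ℝ)).integrableOn_map_iff]
    simp_rw [Function.comp_def, abs_neg, neg_preimage, neg_Iic, neg_zero]
    exact (integrableOn_Ici_iff_integrableOn_Ioi).2 hIoi
  rw [← integrableOn_univ, ← Iic_union_Ioi (a := (0 : ℝ))]
  exact hIic.union hIoi

theorem integral_comp_mul_left_div_abs_rpow (f : ℝ → ℝ) {a : ℝ} (ha : 0 < a) (s : ℝ) :
    ∫ u, f (a * u) / |u| ^ s = a ^ (s - 1) * ∫ v, f v / |v| ^ s := by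
  have hscale : ∀ u, f (a * u) / |u| ^ s = a ^ s * (f (a * u) / |a * u| ^ s) := fun u ↦ by
    rw [abs_mul, abs_of_pos ha, Real.mul_rpow ha.le (abs_nonneg u)]
    field_simp
  simp_rw [hscale, integral_const_mul, Measure.integral_comp_mul_left (fun v ↦ f v / |v| ^ s),
    abs_of_pos (inv_pos.mpr ha), smul_eq_mul, ← mul_assoc, ← Real.rpow_neg_one,
    ← Real.rpow_add ha, sub_eq_add_neg]

theorem norm_exp_I_mul_ofReal_sub_one_le_two (θ : ℝ) : ‖Complex.exp (Complex.I * θ) - 1‖ ≤ 2 :=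
  (norm_sub_le _ _).trans (by rw [Complex.norm_exp_I_mul_ofReal, norm_one]; norm_num)

theorem norm_exp_I_mul_sub_exp_I_mul (a x y : ℝ) :
    ‖Complex.exp (Complex.I * a * x) - Complex.exp (Complex.I * a * y)‖ =
      ‖Complex.exp (Complex.I * ↑(a * (x - y))) - 1‖ := by
  have : Complex.exp (Complex.I * a * x) =
      Complex.exp (Complex.I * ↑(a * (x - y))) * Complex.exp (Complex.I * a * y) := by
    rw [← Complex.exp_add]; push_cast; ring_nf
  rw [this, ← sub_one_mul, norm_mul, mul_assoc, ← Complex.ofReal_mul,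
    Complex.norm_exp_I_mul_ofReal, mul_one]

noncomputable def steinMajorant (b v : ℝ) : ℝ :=
  if |v| ≤ 1 then |v| ^ (1 - 2 * b) else 4 * |v| ^ (-(1 + 2 * b))

theorem steinMajorant_abs (b v : ℝ) : steinMajorant b |v| = steinMajorant b v := by
  simp only [steinMajorant, abs_abs]

theorem norm_exp_I_mul_sub_one_sq_div_le_steinMajorant (b v : ℝ) :
    ‖Complex.exp (Complex.I * v) - 1‖ ^ 2 / |v| ^ (1 + 2 * b) ≤ steinMajorant b v := by
  rcases eq_or_ne v 0 with rfl | hv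
  · simpa [steinMajorant] using Real.rpow_nonneg le_rfl (1 - 2 * b)
  have hv' : 0 < |v| := abs_pos.mpr hv
  unfold steinMajorant
  split_ifs with hsmall
  · calc ‖Complex.exp (Complex.I * v) - 1‖ ^ 2 / |v| ^ (1 + 2 * b)
        ≤ |v| ^ (2 : ℝ) / |v| ^ (1 + 2 * b) := by
          rw [Real.rpow_two]; gcongr; exact Real.norm_exp_I_mul_ofReal_sub_one_le
      _ = |v| ^ (1 - 2 * b) := by rw [← Real.rpow_sub hv']; ring_nf
  · calc ‖Complex.exp (Complex.I * v) - 1‖ ^ 2 / |v| ^ (1 + 2 * b)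
        ≤ 2 ^ 2 / |v| ^ (1 + 2 * b) := by gcongr; exact norm_exp_I_mul_ofReal_sub_one_le_two v
      _ = 4 * |v| ^ (-(1 + 2 * b)) := by rw [Real.rpow_neg hv'.le]; ring

theorem steinMajorant_eqOn_Ioc (b : ℝ) :
    EqOn (steinMajorant b) (fun v ↦ v ^ (1 - 2 * b)) (Ioc 0 1) := fun v hv ↦ by
  rw [steinMajorant, abs_of_pos hv.1, if_pos hv.2]

theorem steinMajorant_eqOn_Ioi (b : ℝ) :
    EqOn (steinMajorant b) (fun v ↦ 4 * v ^ (-(1 + 2 * b))) (Ioi 1) := fun v hv ↦ by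
  rw [steinMajorant, abs_of_pos (one_pos.trans hv), if_neg (not_le.mpr hv)]

theorem integrableOn_Ioc_steinMajorant {b : ℝ} (hb : b < 1) :
    IntegrableOn (steinMajorant b) (Ioc 0 1) := by
  refine IntegrableOn.congr_fun ?_ (steinMajorant_eqOn_Ioc b).symm measurableSet_Ioc
  rw [← intervalIntegrable_iff_integrableOn_Ioc_of_le zero_le_one]
  exact intervalIntegral.intervalIntegrable_rpow' (by linarith)

theorem integrableOn_Ioi_steinMajorant {b : ℝ} (hb : 0 < b) :
    IntegrableOn (steinMajorant b) (Ioi 1) :=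
  IntegrableOn.congr_fun
    ((integrableOn_Ioi_rpow_of_lt (show -(1 + 2 * b) < -1 by linarith) one_pos).const_mul 4)
    (steinMajorant_eqOn_Ioi b).symm measurableSet_Ioi

theorem integrable_steinMajorant {b : ℝ} (hb₀ : 0 < b) (hb₁ : b < 1) :
    Integrable (steinMajorant b) := by
  have hIoi : IntegrableOn (steinMajorant b) (Ioi 0) := by
    rw [← Ioc_union_Ioi_eq_Ioi zero_le_one]
    exact (integrableOn_Ioc_steinMajorant hb₁).union (integrableOn_Ioi_steinMajorant hb₀)
  simpa only [steinMajorant_abs] using integrable_comp_abs hIoi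

theorem integral_steinMajorant {b : ℝ} (hb₀ : 0 < b) (hb₁ : b < 1) :
    ∫ v, steinMajorant b v = 1 / (1 - b) + 4 / b := by
  have hIoc : ∫ v in Ioc 0 1, steinMajorant b v = 1 / (2 - 2 * b) := by
    rw [setIntegral_congr_fun measurableSet_Ioc (steinMajorant_eqOn_Ioc b),
      ← intervalIntegral.integral_of_le zero_le_one, integral_rpow (Or.inl (by linarith)),
      Real.one_rpow, Real.zero_rpow (by linarith)]
    ring_nf
  have hIoi : ∫ v in Ioi 1, steinMajorant b v = 4 / (2 * b) := by
    rw [setIntegral_congr_fun measurableSet_Ioi (steinMajorant_eqOn_Ioi b), integral_const_mul,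
      integral_Ioi_rpow_of_lt (by linarith) one_pos, Real.one_rpow]
    ring_nf
  have hb' : 1 - b ≠ 0 := by linarith
  rw [← funext (steinMajorant_abs b), integral_comp_abs, ← Ioc_union_Ioi_eq_Ioi zero_le_one,
    setIntegral_union Ioc_disjoint_Ioi_same measurableSet_Ioi
      (integrableOn_Ioc_steinMajorant hb₁) (integrableOn_Ioi_steinMajorant hb₀), hIoc, hIoi]
  field_simp

theorem integral_norm_exp_I_mul_sub_one_sq_div_le {b : ℝ} (hb₀ : 0 < b) (hb₁ : b < 1) {a : ℝ}
    (ha : 0 ≤ a) :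
    ∫ u : ℝ, ‖Complex.exp (Complex.I * ↑(a * u)) - 1‖ ^ 2 / |u| ^ (1 + 2 * b) ≤
      (1 / (1 - b) + 4 / b) * a ^ (2 * b) := by
  rcases ha.eq_or_lt with rfl | ha
  · simp [Real.zero_rpow (by positivity : 2 * b ≠ 0)]
  rw [integral_comp_mul_left_div_abs_rpow (fun v : ℝ ↦ ‖Complex.exp (Complex.I * v) - 1‖ ^ 2) ha,
    add_sub_cancel_left, mul_comm]
  gcongr
  calc ∫ v : ℝ, ‖Complex.exp (Complex.I * v) - 1‖ ^ 2 / |v| ^ (1 + 2 * b)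
      ≤ ∫ v, steinMajorant b v :=
        integral_mono_of_nonneg (ae_of_all _ fun _ ↦ by positivity)
          (integrable_steinMajorant hb₀ hb₁)
          (ae_of_all _ (norm_exp_I_mul_sub_one_sq_div_le_steinMajorant b))
    _ = 1 / (1 - b) + 4 / b := integral_steinMajorant hb₀ hb₁

theorem steinDerivative_exp_I_mul_le {b : ℝ} (hb₀ : 0 < b) (hb₁ : b < 1) {a : ℝ} (ha : 0 ≤ a)
    (x : ℝ) :
    steinDerivative b (fun y ↦ Complex.exp (Complex.I * a * y)) x ≤
      √(1 / (1 - b) + 4 / b) * a ^ b := by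
  have hC : 0 ≤ 1 / (1 - b) + 4 / b := by
    have : 0 < 1 - b := by linarith
    positivity
  have htranslate :
      ∫ y : ℝ, ‖Complex.exp (Complex.I * a * x) - Complex.exp (Complex.I * a * y)‖ ^ 2 /
        |x - y| ^ (1 + 2 * b) =
      ∫ u : ℝ, ‖Complex.exp (Complex.I * ↑(a * u)) - 1‖ ^ 2 / |u| ^ (1 + 2 * b) := by
    simp_rw [norm_exp_I_mul_sub_exp_I_mul]
    exact integral_sub_left_eq_self
      (fun u ↦ ‖Complex.exp (Complex.I * ↑(a * u)) - 1‖ ^ 2 / |u| ^ (1 + 2 * b)) volume x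
  rw [steinDerivative, htranslate]
  calc _ ≤ ((1 / (1 - b) + 4 / b) * a ^ (2 * b)) ^ ((1 : ℝ) / 2) :=
        Real.rpow_le_rpow (integral_nonneg fun _ ↦ by positivity)
          (integral_norm_exp_I_mul_sub_one_sq_div_le hb₀ hb₁ ha) (by norm_num)
    _ = √(1 / (1 - b) + 4 / b) * a ^ b := by
        rw [Real.mul_rpow hC (by positivity), ← Real.rpow_mul ha, Real.sqrt_eq_rpow]
        ring_nf

/-- Stein derivative bound for `x ↦ exp(i t η² x)`:
for `b ∈ (0,1)` there is `c(b) > 0` such that for all `t > 0` and `x η : ℝ`,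
`𝒟^b (e^{itη²·})(x) ≤ c(b) (η²)^b t^b`. -/
theorem stein_derivative_exp_sq_bound (b : ℝ) (hb : b ∈ Set.Ioo (0 : ℝ) 1) :
    ∃ c : ℝ, 0 < c ∧ ∀ t : ℝ, 0 < t → ∀ x η : ℝ,
      (∫ y : ℝ, ‖Complex.exp (Complex.I * (t : ℂ) * (η : ℂ) ^ 2 * (x : ℂ)) -
          Complex.exp (Complex.I * (t : ℂ) * (η : ℂ) ^ 2 * (y : ℂ))‖ ^ 2 /
          |x - y| ^ (1 + 2 * b)) ^ ((1 : ℝ) / 2)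
        ≤ c * (η ^ 2) ^ b * t ^ b := by
  obtain ⟨hb₀, hb₁⟩ := hb
  have hb' : 0 < 1 - b := by linarith
  refine ⟨√(1 / (1 - b) + 4 / b), by positivity, fun t ht x η ↦ ?_⟩
  have hfreq : Complex.I * (t : ℂ) * (η : ℂ) ^ 2 = Complex.I * ↑(t * η ^ 2) := by
    push_cast; ring
  have hbound := steinDerivative_exp_I_mul_le hb₀ hb₁ (a := t * η ^ 2) (by positivity) x
  rw [steinDerivative, ← hfreq, Real.mul_rpow ht.le (sq_nonneg η)] at hbound
  linarith
end

section
/- Let b ∈ (0,1). Then there exists a constant c > 0 such that for every t > 0 and every x ∈ ℝ, (∫_ℝ |exp(−i t x|x|) − exp(−i t y|y|)|² / |x − y|^{1+2b} dy)^{1/2} ≤ c (t^{b/2} + t^{b} |x|^{b}). -/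
/-!
Put `ρ = t|x| + √t`. Since `|x|x| - y|y|| ≤ (|x| + |y|)|x - y|`, the phase `y ↦ t y|y|` moves by
at most `2ρ|x - y|` while `|x - y| ≤ ρ⁻¹`, so the two exponentials differ by at most
`2 min(1, ρ|x - y|)`. The integral is therefore at most
`4 ∫ min(1, ρ|h|)² |h|^(-1-2b) dh = 4 (1/(1-b) + 1/b) ρ^(2b)`, computed by splitting at `|h| = ρ⁻¹`,
and `ρ^b ≤ t^(b/2) + t^b |x|^b` by subadditivity of `v ↦ v^b`.
-/

open MeasureTheory Set Complex

lemma norm_exp_neg_I_mul_ofReal (α : ℝ) : ‖exp (-(I * α))‖ = 1 := by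
  simpa [mul_neg] using norm_exp_I_mul_ofReal (-α)

lemma norm_exp_neg_I_mul_sub_le (α β : ℝ) :
    ‖exp (-(I * α)) - exp (-(I * β))‖ ≤ |α - β| := by
  have hsplit :
      exp (-(I * α)) - exp (-(I * β)) = exp (-(I * β)) * (exp (I * ↑(β - α)) - 1) := by
    rw [mul_sub, mul_one, ← Complex.exp_add]; push_cast; ring_nf
  rw [hsplit, norm_mul, norm_exp_neg_I_mul_ofReal, one_mul, abs_sub_comm, ← Real.norm_eq_abs]
  exact Real.norm_exp_I_mul_ofReal_sub_one_le

lemma norm_exp_neg_I_mul_sub_le_two (α β : ℝ) :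
    ‖exp (-(I * α)) - exp (-(I * β))‖ ≤ 2 := by
  calc _ ≤ ‖exp (-(I * α))‖ + ‖exp (-(I * β))‖ := norm_sub_le _ _
    _ = 2 := by rw [norm_exp_neg_I_mul_ofReal, norm_exp_neg_I_mul_ofReal]; norm_num

lemma abs_mul_abs_sub_mul_abs_le (x y : ℝ) :
    abs (x * |x| - y * |y|) ≤ (|x| + |y|) * |x - y| := by
  calc abs (x * |x| - y * |y|)
      = |(x - y) * (|x| + |y|) + (x + y) * (|x| - |y|)| / 2 := by
        rw [← abs_two, ← abs_div]; congr 1; ring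
    _ ≤ (|x - y| * (|x| + |y|) + |x + y| * abs (|x| - |y|)) / 2 := by
        gcongr
        refine (abs_add_le _ _).trans ?_
        rw [abs_mul, abs_mul, abs_of_nonneg (by positivity : 0 ≤ |x| + |y|)]
    _ ≤ (|x - y| * (|x| + |y|) + (|x| + |y|) * |x - y|) / 2 := by
        have := mul_le_mul (abs_add_le x y) (abs_abs_sub_abs_le x y) (abs_nonneg _)
          (by positivity)
        linarith
    _ = (|x| + |y|) * |x - y| := by ring

lemma MeasureTheory.IntegrableOn.comp_abs {E : Type*} [NormedAddCommGroup E] {g : ℝ → E}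
    (hg : IntegrableOn g (Ioi 0)) : Integrable (fun x ↦ g |x|) := by
  have hIoi : IntegrableOn (fun x ↦ g |x|) (Ioi 0) :=
    hg.congr_fun (fun x hx ↦ by rw [abs_of_pos hx]) measurableSet_Ioi
  rw [← integrableOn_univ, ← Iic_union_Ioi (a := 0), integrableOn_union]
  refine ⟨?_, hIoi⟩
  rw [← (Measure.measurePreserving_neg volume).integrableOn_comp_preimage
    (Homeomorph.neg ℝ).measurableEmbedding]
  simp only [Function.comp_def, abs_neg, neg_preimage, neg_Iic, neg_zero]
  exact (integrableOn_Ici_iff_integrableOn_Ioi (hb := enorm_ne_top)).2 hIoi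

noncomputable def truncKernel (b ρ v : ℝ) : ℝ := min 1 (ρ * v) ^ 2 / v ^ (1 + 2 * b)

section truncKernel

variable {b ρ : ℝ}

lemma truncKernel_eqOn_Ioc (hρ : 0 < ρ) :
    EqOn (truncKernel b ρ) (fun v ↦ ρ ^ 2 * v ^ (1 - 2 * b)) (Ioc 0 ρ⁻¹) := by
  rintro v ⟨hv, hvρ⟩
  have hρv : ρ * v ≤ 1 := (le_inv_mul_iff₀ hρ).1 (by rwa [mul_one])
  have hsplit : v ^ 2 = v ^ (1 - 2 * b) * v ^ (1 + 2 * b) := by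
    rw [← Real.rpow_add hv, ← Real.rpow_natCast]; norm_num
  rw [truncKernel, min_eq_right hρv, mul_pow, hsplit,
    mul_div_assoc, mul_div_cancel_right₀ _ (Real.rpow_pos_of_pos hv _).ne']

lemma truncKernel_eqOn_Ioi (hρ : 0 < ρ) :
    EqOn (truncKernel b ρ) (fun v ↦ v ^ (-(1 + 2 * b))) (Ioi ρ⁻¹) := by
  intro v hv
  have hρv : 1 ≤ ρ * v := ((inv_lt_iff_one_lt_mul₀' hρ).1 hv).le
  have hv₀ : 0 ≤ v := (inv_pos.2 hρ).le.trans hv.le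
  rw [truncKernel, min_eq_left hρv, one_pow, one_div]
  exact (Real.rpow_neg hv₀ _).symm

lemma integrableOn_Ioc_truncKernel (hb : b < 1) (hρ : 0 < ρ) :
    IntegrableOn (truncKernel b ρ) (Ioc 0 ρ⁻¹) := by
  refine IntegrableOn.congr_fun ?_ (truncKernel_eqOn_Ioc hρ).symm measurableSet_Ioc
  exact ((intervalIntegral.intervalIntegrable_rpow' (by linarith)).1).const_mul _

lemma integrableOn_Ioi_truncKernel (hb : 0 < b) (hρ : 0 < ρ) :
    IntegrableOn (truncKernel b ρ) (Ioi ρ⁻¹) :=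
  (integrableOn_Ioi_rpow_of_lt (by linarith) (inv_pos.2 hρ)).congr_fun
    (truncKernel_eqOn_Ioi hρ).symm measurableSet_Ioi

lemma integral_Ioi_truncKernel (hb₀ : 0 < b) (hb₁ : b < 1) (hρ : 0 < ρ) :
    ∫ v in Ioi 0, truncKernel b ρ v = ρ ^ (2 * b) * (1 / (2 - 2 * b) + 1 / (2 * b)) := by
  rw [← Ioc_union_Ioi_eq_Ioi (inv_pos.2 hρ).le, setIntegral_union (Ioc_disjoint_Ioi le_rfl)
    measurableSet_Ioi (integrableOn_Ioc_truncKernel hb₁ hρ) (integrableOn_Ioi_truncKernel hb₀ hρ),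
    setIntegral_congr_fun measurableSet_Ioc (truncKernel_eqOn_Ioc hρ),
    setIntegral_congr_fun measurableSet_Ioi (truncKernel_eqOn_Ioi hρ),
    integral_const_mul, ← intervalIntegral.integral_of_le (inv_pos.2 hρ).le,
    integral_rpow (Or.inl (by linarith)), integral_Ioi_rpow_of_lt (by linarith) (inv_pos.2 hρ)]
  have h₁ : ρ⁻¹ ^ (2 - 2 * b) = ρ ^ (2 * b) / ρ ^ 2 := by
    rw [Real.inv_rpow hρ.le, Real.rpow_sub hρ, Real.rpow_two, inv_div]
  have h₂ : ρ⁻¹ ^ (-(2 * b)) = ρ ^ (2 * b) := by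
    rw [Real.inv_rpow hρ.le, Real.rpow_neg hρ.le, inv_inv]
  rw [show 1 - 2 * b + 1 = 2 - 2 * b by ring, show -(1 + 2 * b) + 1 = -(2 * b) by ring, h₁, h₂,
    Real.zero_rpow (by linarith)]
  field_simp
  ring

lemma integrable_truncKernel_abs (hb₀ : 0 < b) (hb₁ : b < 1) (hρ : 0 < ρ) :
    Integrable (fun h ↦ truncKernel b ρ |h|) := by
  refine IntegrableOn.comp_abs ?_
  rw [← Ioc_union_Ioi_eq_Ioi (inv_pos.2 hρ).le]
  exact (integrableOn_Ioc_truncKernel hb₁ hρ).union (integrableOn_Ioi_truncKernel hb₀ hρ)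

lemma integral_truncKernel_abs (hb₀ : 0 < b) (hb₁ : b < 1) (hρ : 0 < ρ) :
    ∫ h, truncKernel b ρ |h| = ρ ^ (2 * b) * (1 / (1 - b) + 1 / b) := by
  rw [integral_comp_abs, integral_Ioi_truncKernel hb₀ hb₁ hρ]
  field_simp

end truncKernel

lemma norm_exp_sub_le_two_mul_min {t x y ρ : ℝ} (ht : 0 ≤ t) (hρ : 0 < ρ)
    (hρx : t * (2 * |x| + ρ⁻¹) ≤ 2 * ρ) :
    ‖exp (-(I * t * x * (|x| : ℝ))) - exp (-(I * t * y * (|y| : ℝ)))‖ ≤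
      2 * min 1 (ρ * |x - y|) := by
  have hphase : ∀ z : ℝ, I * t * z * (|z| : ℝ) = I * ↑(t * (z * |z|)) := by
    intro z; push_cast; ring
  simp only [hphase]
  rcases le_or_gt (ρ * |x - y|) 1 with hnear | hfar
  · have hclose : |x - y| ≤ ρ⁻¹ := by rwa [← one_div, le_div_iff₀' hρ]
    have hy : |y| ≤ |x| + ρ⁻¹ := by
      linarith [abs_sub_abs_le_abs_sub y x, abs_sub_comm y x]
    calc _ ≤ |t * (x * |x|) - t * (y * |y|)| := norm_exp_neg_I_mul_sub_le _ _
      _ ≤ t * ((|x| + |y|) * |x - y|) := by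
          rw [← mul_sub, abs_mul, abs_of_nonneg ht]
          gcongr
          exact abs_mul_abs_sub_mul_abs_le x y
      _ ≤ t * (2 * |x| + ρ⁻¹) * |x - y| := by
          rw [← mul_assoc]
          exact mul_le_mul_of_nonneg_right (mul_le_mul_of_nonneg_left (by linarith) ht)
            (abs_nonneg _)
      _ ≤ 2 * ρ * |x - y| := by gcongr
      _ = 2 * min 1 (ρ * |x - y|) := by rw [min_eq_right hnear, mul_assoc]
  · rw [min_eq_left hfar.le, mul_one]
    exact norm_exp_neg_I_mul_sub_le_two _ _

lemma norm_exp_sub_sq_div_le_truncKernel {b t x y ρ : ℝ} (ht : 0 ≤ t) (hρ : 0 < ρ)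
    (hρx : t * (2 * |x| + ρ⁻¹) ≤ 2 * ρ) :
    ‖exp (-(I * t * x * (|x| : ℝ))) - exp (-(I * t * y * (|y| : ℝ)))‖ ^ 2 /
        |x - y| ^ (1 + 2 * b) ≤ 4 * truncKernel b ρ |x - y| := by
  rw [truncKernel, mul_div_assoc']
  gcongr
  calc _ ≤ (2 * min 1 (ρ * |x - y|)) ^ 2 :=
        pow_le_pow_left₀ (norm_nonneg _) (norm_exp_sub_le_two_mul_min ht hρ hρx) 2
    _ = 4 * min 1 (ρ * |x - y|) ^ 2 := by ring

lemma integral_norm_exp_sub_sq_div_le {b t x ρ : ℝ} (hb₀ : 0 < b) (hb₁ : b < 1) (ht : 0 ≤ t)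
    (hρ : 0 < ρ) (hρx : t * (2 * |x| + ρ⁻¹) ≤ 2 * ρ) :
    ∫ y : ℝ, ‖exp (-(I * t * x * (|x| : ℝ))) - exp (-(I * t * y * (|y| : ℝ)))‖ ^ 2 /
        |x - y| ^ (1 + 2 * b) ≤ 4 * (ρ ^ (2 * b) * (1 / (1 - b) + 1 / b)) := by
  calc _ ≤ ∫ y, 4 * truncKernel b ρ |x - y| :=
        integral_mono_of_nonneg (.of_forall fun y ↦ by positivity)
          (((integrable_truncKernel_abs hb₀ hb₁ hρ).comp_sub_left x).const_mul 4)
          (.of_forall fun y ↦ norm_exp_sub_sq_div_le_truncKernel ht hρ hρx)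
    _ = 4 * (ρ ^ (2 * b) * (1 / (1 - b) + 1 / b)) := by
        rw [integral_const_mul, integral_sub_left_eq_self (fun h ↦ truncKernel b ρ |h|),
          integral_truncKernel_abs hb₀ hb₁ hρ]

lemma rpow_mul_add_sqrt_le {t a b : ℝ} (ht : 0 ≤ t) (ha : 0 ≤ a) (hb₀ : 0 ≤ b) (hb₁ : b ≤ 1) :
    (t * a + √t) ^ b ≤ t ^ (b / 2) + t ^ b * a ^ b := by
  calc (t * a + √t) ^ b ≤ (t * a) ^ b + √t ^ b :=
        Real.rpow_add_le_add_rpow (by positivity) (Real.sqrt_nonneg t) hb₀ hb₁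
    _ = t ^ (b / 2) + t ^ b * a ^ b := by
        rw [Real.mul_rpow ht ha, Real.sqrt_eq_rpow, ← Real.rpow_mul ht]
        ring_nf

lemma mul_two_mul_add_inv_le {t a : ℝ} (ht : 0 < t) (ha : 0 ≤ a) :
    t * (2 * a + (t * a + √t)⁻¹) ≤ 2 * (t * a + √t) := by
  have hsqrt : 0 < √t := Real.sqrt_pos.2 ht
  have hinv : t * (t * a + √t)⁻¹ ≤ √t := by
    rw [← div_eq_mul_inv, div_le_iff₀ (by positivity)]
    nlinarith [Real.mul_self_sqrt ht.le, mul_nonneg (mul_nonneg hsqrt.le ht.le) ha]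
  linarith

/-- Stein derivative bound for `x ↦ exp(−i t x|x|)`:
for `b ∈ (0,1)` there is `c > 0` such that for all `t > 0` and `x : ℝ`,
`𝒟^b (e^{−it·|·|})(x) ≤ c (t^{b/2} + t^b |x|^b)`. -/
theorem stein_derivative_exp_xabs_bound (b : ℝ) (hb : b ∈ Set.Ioo (0 : ℝ) 1) :
    ∃ c : ℝ, 0 < c ∧ ∀ t : ℝ, 0 < t → ∀ x : ℝ,
      (∫ y : ℝ, ‖Complex.exp (-(Complex.I * (t : ℂ) * (x : ℂ) * (|x| : ℝ))) -
          Complex.exp (-(Complex.I * (t : ℂ) * (y : ℂ) * (|y| : ℝ)))‖ ^ 2 /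
          |x - y| ^ (1 + 2 * b)) ^ ((1 : ℝ) / 2)
        ≤ c * (t ^ (b / 2) + t ^ b * |x| ^ b) := by
  obtain ⟨hb₀, hb₁⟩ := hb
  set C := 1 / (1 - b) + 1 / b
  have hC : 0 < C := by have := sub_pos.2 hb₁; positivity
  refine ⟨2 * √C, by positivity, fun t ht x ↦ ?_⟩
  set ρ := t * |x| + √t
  have hρ : 0 < ρ := by positivity
  calc _ ≤ (4 * (ρ ^ (2 * b) * C)) ^ ((1 : ℝ) / 2) :=
        Real.rpow_le_rpow (integral_nonneg fun y ↦ by positivity)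
          (integral_norm_exp_sub_sq_div_le hb₀ hb₁ ht.le hρ
            (mul_two_mul_add_inv_le ht (abs_nonneg x))) (by norm_num)
    _ = 2 * √C * ρ ^ b := by
        rw [← Real.sqrt_eq_rpow, ← Real.sqrt_sq (by positivity : 0 ≤ 2 * √C * ρ ^ b)]
        congr 1
        have hsq : (ρ ^ b) ^ 2 = ρ ^ (2 * b) := by rw [← Real.rpow_mul_natCast hρ.le]; ring_nf
        rw [mul_pow, mul_pow, Real.sq_sqrt hC.le, hsq]
        ring
    _ ≤ 2 * √C * (t ^ (b / 2) + t ^ b * |x| ^ b) := by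
        gcongr
        exact rpow_mul_add_sqrt_le ht.le (abs_nonneg x) hb₀.le hb₁.le
end

section
/- Let p ∈ (1,∞) and let f : ℝ → ℝ be a function in L^p(ℝ). Suppose there is a point x₀ ∈ ℝ such that the one-sided limits L⁺ = lim_{x → x₀⁺} f(x) and L⁻ = lim_{x → x₀⁻} f(x) exist and L⁺ ≠ L⁻. Then for every δ > 0, the function x ↦ (∫_ℝ |f(x) − f(y)|² / |x − y|^{1 + 2/p} dy)^{1/2} does not belong to L^p((x₀ − δ, x₀ + δ)); i.e., ∫_{x₀−δ}^{x₀+δ} (∫_ℝ |f(x) − f(y)|² / |x − y|^{1+2/p} dy)^{p/2} dx = ∞. -/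
/-!
If `f` jumps by `c > 0` at `x₀`, then for `x = x₀ + t` with `t > 0` small every
`y ∈ (x₀ - t, x₀)` has `|f x - f y| ≥ c / 2` and `|x - y| ≤ 2t`, so
`𝒟^b f(x)² ≳ t · t^(-1-2b) = t^(-2b)`. For `b = 1/p` this gives `𝒟^b f(x)^p ≳ t⁻¹`,
which is not integrable at `t = 0`.
-/

open MeasureTheory Set Filter Topology
open scoped ENNReal

/-- `steinSq f (1 + 2 * b) x = 𝒟^b f(x) ^ 2`. -/
noncomputable def steinSq (f : ℝ → ℝ) (s x : ℝ) : ℝ≥0∞ :=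
  ∫⁻ y, ENNReal.ofReal (|f x - f y| ^ 2) / ENNReal.ofReal (|x - y| ^ s)

lemma lintegral_Ioo_ofReal_rpow_eq_top {τ r : ℝ} (hτ : 0 < τ) (hr : r ≤ -1) :
    ∫⁻ x in Ioo 0 τ, ENNReal.ofReal (x ^ r) = ∞ := by
  by_contra h
  have hint := (lintegral_ofReal_ne_top_iff_integrable
    (by fun_prop : Measurable fun x : ℝ => x ^ r).aestronglyMeasurable
    ((ae_restrict_iff' measurableSet_Ioo).2
      (ae_of_all _ fun x hx => Real.rpow_nonneg hx.1.le r))).1 h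
  exact ((intervalIntegral.integrableOn_Ioo_rpow_iff hτ).1 hint).not_ge hr

lemma lintegral_Ioo_ofReal_mul_sub_rpow_eq_top (a : ℝ) {K τ r : ℝ} (hK : 0 < K) (hτ : 0 < τ)
    (hr : r ≤ -1) : ∫⁻ x in Ioo a (a + τ), ENNReal.ofReal (K * (x - a) ^ r) = ∞ := by
  have hshift := (measurePreserving_add_right volume a).setLIntegral_comp_preimage_emb
    (MeasurableEquiv.addRight a).measurableEmbedding
    (fun x => ENNReal.ofReal (K * (x - a) ^ r)) (Ioo a (a + τ))
  simp only [preimage_add_const_Ioo, sub_self, add_sub_cancel_left, add_sub_cancel_right]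
    at hshift
  simp_rw [← hshift, ENNReal.ofReal_mul hK.le]
  rw [lintegral_const_mul' _ _ ENNReal.ofReal_ne_top, lintegral_Ioo_ofReal_rpow_eq_top hτ hr]
  exact ENNReal.mul_top (ENNReal.ofReal_pos.2 hK).ne'

lemma exists_le_dist_of_tendsto_nhdsGT_of_tendsto_nhdsLT {α : Type*} [MetricSpace α]
    {f : ℝ → α} {x₀ : ℝ} {a b : α} (ha : Tendsto f (𝓝[>] x₀) (𝓝 a))
    (hb : Tendsto f (𝓝[<] x₀) (𝓝 b)) (hab : a ≠ b) :
    ∃ c > 0, ∃ τ > 0, ∀ x ∈ Ioo x₀ (x₀ + τ), ∀ y ∈ Ioo (x₀ - τ) x₀, c ≤ dist (f x) (f y) := by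
  have hd : 0 < dist a b := dist_pos.2 hab
  obtain ⟨η₁, hη₁, ha'⟩ := Metric.tendsto_nhdsWithin_nhds.1 ha _ (div_pos hd four_pos)
  obtain ⟨η₂, hη₂, hb'⟩ := Metric.tendsto_nhdsWithin_nhds.1 hb _ (div_pos hd four_pos)
  refine ⟨dist a b / 2, half_pos hd, min η₁ η₂, lt_min hη₁ hη₂, fun x hx y hy => ?_⟩
  have hxa : dist (f x) a < dist a b / 4 := ha' hx.1 <| by
    rw [Real.dist_eq, abs_of_pos (sub_pos.2 hx.1)]
    linarith [hx.2, min_le_left η₁ η₂]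
  have hyb : dist (f y) b < dist a b / 4 := hb' hy.2 <| by
    rw [Real.dist_eq, abs_of_neg (sub_neg.2 hy.2)]
    linarith [hy.1, min_le_right η₁ η₂]
  linarith [dist_triangle4 a (f x) (f y) b, dist_comm a (f x)]

lemma ofReal_div_rpow_mul_volume_le_steinSq {f : ℝ → ℝ} {s c r x : ℝ} {S : Set ℝ}
    (hS : MeasurableSet S) (hs : 0 ≤ s) (hc : 0 ≤ c) (hr : 0 < r)
    (hfS : ∀ y ∈ S, c ≤ |f x - f y|) (hxS : ∀ y ∈ S, |x - y| ≤ r) :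
    ENNReal.ofReal (c ^ 2 / r ^ s) * volume S ≤ steinSq f s x := by
  rw [← setLIntegral_const, ENNReal.ofReal_div_of_pos (by positivity)]
  refine (setLIntegral_mono' hS fun y hy => ?_).trans (setLIntegral_le_lintegral _ _)
  gcongr
  · exact hfS y hy
  · exact hxS y hy

lemma ofReal_mul_sub_rpow_le_steinSq {f : ℝ → ℝ} {s c x₀ τ x : ℝ} (hs : 0 ≤ s) (hc : 0 ≤ c)
    (hjump : ∀ x ∈ Ioo x₀ (x₀ + τ), ∀ y ∈ Ioo (x₀ - τ) x₀, c ≤ |f x - f y|)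
    (hx : x ∈ Ioo x₀ (x₀ + τ)) :
    ENNReal.ofReal (c ^ 2 / 2 ^ s * (x - x₀) ^ (1 - s)) ≤ steinSq f s x := by
  have ht : 0 < x - x₀ := sub_pos.2 hx.1
  have hvol := ofReal_div_rpow_mul_volume_le_steinSq (f := f) (x := x)
    (S := Ioo (x₀ - (x - x₀)) x₀) (r := 2 * (x - x₀)) measurableSet_Ioo hs hc (by positivity)
    (fun y hy => hjump x hx y ⟨by linarith [hy.1, hx.2], hy.2⟩)
    (fun y hy => by rw [abs_of_pos (by linarith [hy.2])]; linarith [hy.1])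
  rw [Real.volume_Ioo, sub_sub_cancel, ← ENNReal.ofReal_mul (by positivity)] at hvol
  convert hvol using 2
  rw [Real.mul_rpow zero_le_two ht.le, Real.rpow_sub ht, Real.rpow_one]
  field_simp

theorem lintegral_Ioo_steinSq_rpow_eq_top {f : ℝ → ℝ} {s q x₀ Lplus Lminus δ : ℝ} (hq : 0 < q)
    (hsq : (1 - s) * q ≤ -1) (hplus : Tendsto f (𝓝[>] x₀) (𝓝 Lplus))
    (hminus : Tendsto f (𝓝[<] x₀) (𝓝 Lminus)) (hne : Lplus ≠ Lminus) (hδ : 0 < δ) :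
    ∫⁻ x in Ioo (x₀ - δ) (x₀ + δ), steinSq f s x ^ q = ∞ := by
  have hs : 0 ≤ s := by nlinarith
  obtain ⟨c, hc, τ, hτ, hjump⟩ :=
    exists_le_dist_of_tendsto_nhdsGT_of_tendsto_nhdsLT hplus hminus hne
  simp only [Real.dist_eq] at hjump
  have hK : 0 < (c ^ 2 / 2 ^ s) ^ q := by positivity
  have hρ : Ioo x₀ (x₀ + min τ δ) ⊆ Ioo (x₀ - δ) (x₀ + δ) :=
    Ioo_subset_Ioo (by linarith) (by linarith [min_le_right τ δ])
  refine eq_top_iff.2 <| calc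
    ∞ = ∫⁻ x in Ioo x₀ (x₀ + min τ δ),
          ENNReal.ofReal ((c ^ 2 / 2 ^ s) ^ q * (x - x₀) ^ ((1 - s) * q)) :=
      (lintegral_Ioo_ofReal_mul_sub_rpow_eq_top x₀ hK (lt_min hτ hδ) hsq).symm
    _ ≤ ∫⁻ x in Ioo x₀ (x₀ + min τ δ), steinSq f s x ^ q :=
      setLIntegral_mono' measurableSet_Ioo fun x hx => ?_
    _ ≤ _ := lintegral_mono_set hρ
  have ht : 0 ≤ x - x₀ := sub_nonneg.2 hx.1.le
  rw [Real.rpow_mul ht, ← Real.mul_rpow (by positivity) (by positivity),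
    ← ENNReal.ofReal_rpow_of_nonneg (by positivity) hq.le]
  gcongr
  exact ofReal_mul_sub_rpow_le_steinSq hs hc.le hjump
    (Ioo_subset_Ioo_right (by linarith [min_le_left τ δ]) hx)

theorem jump_not_locally_Lp_general (p : ℝ) (hp : 1 < p) (f : ℝ → ℝ)
    (x₀ Lplus Lminus : ℝ)
    (hplus : Filter.Tendsto f (nhdsWithin x₀ (Set.Ioi x₀)) (nhds Lplus))
    (hminus : Filter.Tendsto f (nhdsWithin x₀ (Set.Iio x₀)) (nhds Lminus))
    (hne : Lplus ≠ Lminus) (δ : ℝ) (hδ : 0 < δ) :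
    ∫⁻ x in Set.Ioo (x₀ - δ) (x₀ + δ),
        (∫⁻ y, ENNReal.ofReal (|f x - f y| ^ 2) / ENNReal.ofReal (|x - y| ^ (1 + 2 / p)))
          ^ (p / 2) = ∞ := by
  have hp₀ : p ≠ 0 := by positivity
  refine lintegral_Ioo_steinSq_rpow_eq_top (by positivity) (le_of_eq ?_) hplus hminus hne hδ
  field_simp
  ring

/-- An `L^p` function with a jump discontinuity at `x₀` has Stein derivative of order
`1/p` failing to be locally `L^p` near `x₀`: for every `δ > 0`,
`∫_{x₀−δ}^{x₀+δ} (∫ |f(x)−f(y)|²/|x−y|^{1+2/p} dy)^{p/2} dx = ∞`. -/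
theorem jump_not_locally_Lp (p : ℝ) (hp : 1 < p) (f : ℝ → ℝ)
    (hf : MemLp f (ENNReal.ofReal p) volume)
    (x₀ Lplus Lminus : ℝ)
    (hplus : Filter.Tendsto f (nhdsWithin x₀ (Set.Ioi x₀)) (nhds Lplus))
    (hminus : Filter.Tendsto f (nhdsWithin x₀ (Set.Iio x₀)) (nhds Lminus))
    (hne : Lplus ≠ Lminus) (δ : ℝ) (hδ : 0 < δ) :
    ∫⁻ x in Set.Ioo (x₀ - δ) (x₀ + δ),
        (∫⁻ y, ENNReal.ofReal (|f x - f y| ^ 2) / ENNReal.ofReal (|x - y| ^ (1 + 2 / p)))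
          ^ (p / 2) = ∞ :=
  jump_not_locally_Lp_general p hp f x₀ Lplus Lminus hplus hminus hne δ hδ
end

section
/- Let w : ℝ² → ℝ be a three-times continuously differentiable function such that all of its first-, second-, and third-order partial derivatives are bounded on ℝ². For λ ∈ (0,1) define w_λ(x,y) = w(x,y) · exp(−λ(x² + y²)). Then there exist constants c₁, c₂, c₃ > 0, independent of λ, such that for every λ ∈ (0,1): every first-order partial derivative of w_λ is bounded by c₁ on ℝ², every second-order partial derivative of w_λ is bounded by c₂ on ℝ², and every third-order partial derivative of w_λ is bounded by c₃ on ℝ². -/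
open Set Real Polynomial
open scoped Nat ContDiff

/-!
Write `e^{-λ(x²+y²)} = G(√λ q)` with `q = (x, y)` and `G(q) = e^{-(x²+y²)}`. Every derivative
of `G` is a polynomial times `G`, so `(1 + ‖q‖) ‖DⁿG(q)‖` is bounded for each `n`. In the Leibniz
expansion of `Dⁿ(w · G(√λ ·))` the terms containing a derivative of `w` are bounded, since the
chain rule only contributes factors `√λ ≤ 1`. The remaining term `w(q) · √λⁿ (DⁿG)(√λ q)`,
`n ≥ 1`, is bounded because `w` grows at most linearly and `(1 + ‖q‖) √λⁿ ≤ 1 + ‖√λ q‖`.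
-/

section

variable {E F G : Type*} [NormedAddCommGroup E] [NormedSpace ℝ E]
  [NormedAddCommGroup F] [NormedSpace ℝ F] [NormedAddCommGroup G] [NormedSpace ℝ G]

theorem norm_iteratedFDeriv_comp_right_le_of_norm_le_one {L : G →L[ℝ] E} (hL : ‖L‖ ≤ 1)
    {f : E → F} {N : ℕ∞ω} (hf : ContDiff ℝ N f) {n : ℕ} (hn : n ≤ N) (x : G) :
    ‖iteratedFDeriv ℝ n (f ∘ L) x‖ ≤ ‖iteratedFDeriv ℝ n f (L x)‖ := by
  rw [L.iteratedFDeriv_comp_right hf x hn]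
  refine ((iteratedFDeriv ℝ n f (L x)).norm_compContinuousLinearMap_le _).trans ?_
  simpa using mul_le_of_le_one_right (norm_nonneg _) (pow_le_one₀ (norm_nonneg L) hL)

theorem norm_le_norm_zero_add_mul_norm {w : E → F} (hw : Differentiable ℝ w) {A : ℝ}
    (hA : ∀ x, ‖fderiv ℝ w x‖ ≤ A) (x : E) : ‖w x‖ ≤ ‖w 0‖ + A * ‖x‖ := by
  have := convex_univ.norm_image_sub_le_of_norm_fderiv_le (fun y _ => hw y) (fun y _ => hA y)
    (mem_univ 0) (mem_univ x)
  rw [sub_zero] at this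
  linarith [norm_le_norm_add_norm_sub' (w x) (w 0)]

def DerivsDecay (f : E → F) : Prop :=
  ∀ n : ℕ, ∃ M, ∀ x, (1 + ‖x‖) * ‖iteratedFDeriv ℝ n f x‖ ≤ M

theorem DerivsDecay.prod_mul {f : E → ℝ} {g : F → ℝ} (hf : ContDiff ℝ ∞ f) (hg : ContDiff ℝ ∞ g)
    (hf_decay : DerivsDecay f) (hg_decay : DerivsDecay g) :
    DerivsDecay fun p : E × F => f p.1 * g p.2 := by
  choose M hM using hf_decay
  choose M' hM' using hg_decay
  intro n
  refine ⟨∑ i ∈ Finset.range (n + 1), n.choose i * M i * M' (n - i), fun p => ?_⟩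
  have h_fst (i : ℕ) := norm_iteratedFDeriv_comp_right_le_of_norm_le_one
    (ContinuousLinearMap.norm_fst_le ℝ E F) hf (n := i) (mod_cast le_top) p
  have h_snd (i : ℕ) := norm_iteratedFDeriv_comp_right_le_of_norm_le_one
    (ContinuousLinearMap.norm_snd_le ℝ E F) hg (n := i) (mod_cast le_top) p
  have h_weight : 1 + ‖p‖ ≤ (1 + ‖p.1‖) * (1 + ‖p.2‖) := by
    rw [Prod.norm_def]
    rcases max_cases ‖p.1‖ ‖p.2‖ with ⟨h, -⟩ | ⟨h, -⟩ <;> rw [h] <;>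
      nlinarith [norm_nonneg p.1, norm_nonneg p.2]
  have h_term : ∀ i, (1 + ‖p‖) * (‖iteratedFDeriv ℝ i (fun p : E × F => f p.1) p‖ *
      ‖iteratedFDeriv ℝ (n - i) (fun p : E × F => g p.2) p‖) ≤ M i * M' (n - i) := by
    intro i
    calc _ ≤ (1 + ‖p.1‖) * (1 + ‖p.2‖) *
          (‖iteratedFDeriv ℝ i f p.1‖ * ‖iteratedFDeriv ℝ (n - i) g p.2‖) := by
          gcongr
          exacts [h_fst i, h_snd (n - i)]
      _ = ((1 + ‖p.1‖) * ‖iteratedFDeriv ℝ i f p.1‖) *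
          ((1 + ‖p.2‖) * ‖iteratedFDeriv ℝ (n - i) g p.2‖) := by ring
      _ ≤ M i * M' (n - i) :=
          mul_le_mul (hM i p.1) (hM' (n - i) p.2) (by positivity)
            ((by positivity : (0:ℝ) ≤ _).trans (hM i p.1))
  calc (1 + ‖p‖) * ‖iteratedFDeriv ℝ n (fun p : E × F => f p.1 * g p.2) p‖
      ≤ (1 + ‖p‖) * ∑ i ∈ Finset.range (n + 1), n.choose i *
          ‖iteratedFDeriv ℝ i (fun p : E × F => f p.1) p‖ *
          ‖iteratedFDeriv ℝ (n - i) (fun p : E × F => g p.2) p‖ := by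
        gcongr
        exact norm_iteratedFDeriv_mul_le (hf.comp contDiff_fst) (hg.comp contDiff_snd) p
          (by exact_mod_cast le_top)
    _ = ∑ i ∈ Finset.range (n + 1), n.choose i *
          ((1 + ‖p‖) * (‖iteratedFDeriv ℝ i (fun p : E × F => f p.1) p‖ *
          ‖iteratedFDeriv ℝ (n - i) (fun p : E × F => g p.2) p‖)) := by
        rw [Finset.mul_sum]
        exact Finset.sum_congr rfl fun i _ => by ring
    _ ≤ _ := by
        refine Finset.sum_le_sum fun i _ => ?_
        rw [mul_assoc]
        exact mul_le_mul_of_nonneg_left (h_term i) (Nat.cast_nonneg _)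

theorem DerivsDecay.exists_norm_iteratedFDeriv_comp_smul_le {f : E → F} (hf : ContDiff ℝ ∞ f)
    (h : DerivsDecay f) (n : ℕ) :
    ∃ M, ∀ s ∈ Icc (0 : ℝ) 1, ∀ x, ‖iteratedFDeriv ℝ n (fun y => f (s • y)) x‖ ≤ M := by
  obtain ⟨M, hM⟩ := h n
  refine ⟨M, fun s hs x => ?_⟩
  rw [iteratedFDeriv_comp_const_smul s (hf.of_le (mod_cast le_top)), norm_smul, norm_pow,
    Real.norm_of_nonneg hs.1]
  calc s ^ n * ‖iteratedFDeriv ℝ n f (s • x)‖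
      ≤ 1 * ((1 + ‖s • x‖) * ‖iteratedFDeriv ℝ n f (s • x)‖) := by
        gcongr
        · exact pow_le_one₀ hs.1 hs.2
        · exact le_mul_of_one_le_left (norm_nonneg _) (le_add_of_nonneg_right (norm_nonneg _))
    _ ≤ M := by rw [one_mul]; exact hM _

theorem DerivsDecay.exists_one_add_norm_mul_norm_iteratedFDeriv_comp_smul_le {f : E → F}
    (hf : ContDiff ℝ ∞ f) (h : DerivsDecay f) {n : ℕ} (hn : n ≠ 0) :
    ∃ M, ∀ s ∈ Icc (0 : ℝ) 1, ∀ x,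
      (1 + ‖x‖) * ‖iteratedFDeriv ℝ n (fun y => f (s • y)) x‖ ≤ M := by
  obtain ⟨M, hM⟩ := h n
  refine ⟨M, fun s hs x => ?_⟩
  rw [iteratedFDeriv_comp_const_smul s (hf.of_le (mod_cast le_top)), norm_smul, norm_pow,
    Real.norm_of_nonneg hs.1]
  have h_weight : (1 + ‖x‖) * s ^ n ≤ 1 + ‖s • x‖ := by
    rw [norm_smul, Real.norm_of_nonneg hs.1]
    nlinarith [pow_le_one₀ hs.1 hs.2 (n := n), pow_le_of_le_one hs.1 hs.2 hn, norm_nonneg x]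
  calc (1 + ‖x‖) * (s ^ n * ‖iteratedFDeriv ℝ n f (s • x)‖)
      = (1 + ‖x‖) * s ^ n * ‖iteratedFDeriv ℝ n f (s • x)‖ := (mul_assoc _ _ _).symm
    _ ≤ (1 + ‖s • x‖) * ‖iteratedFDeriv ℝ n f (s • x)‖ := by gcongr
    _ ≤ M := hM _

variable {𝔸 : Type*} [NormedRing 𝔸] [NormedAlgebra ℝ 𝔸]

theorem exists_norm_iteratedFDeriv_mul_comp_smul_le {w g : E → 𝔸} {N : ℕ} (hw : ContDiff ℝ N w)
    (hw_bdd : ∀ k, 1 ≤ k → k ≤ N → ∃ A, ∀ x, ‖iteratedFDeriv ℝ k w x‖ ≤ A)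
    (hg : ContDiff ℝ ∞ g) (hg_decay : DerivsDecay g) {n : ℕ} (hn : n ≠ 0) (hnN : n ≤ N) :
    ∃ C, ∀ s ∈ Icc (0 : ℝ) 1, ∀ x,
      ‖iteratedFDeriv ℝ n (fun y => w y * g (s • y)) x‖ ≤ C := by
  choose! A hA using hw_bdd
  choose! M hM using hg_decay.exists_norm_iteratedFDeriv_comp_smul_le hg
  obtain ⟨M₀, hM₀⟩ := hg_decay.exists_one_add_norm_mul_norm_iteratedFDeriv_comp_smul_le hg hn
  have hN : 1 ≤ N := by omega
  have h_growth (x : E) : ‖w x‖ ≤ max ‖w 0‖ (A 1) * (1 + ‖x‖) := by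
    have := norm_le_norm_zero_add_mul_norm (hw.differentiable (mod_cast (by omega : N ≠ 0)))
      (fun y => (norm_iteratedFDeriv_one (𝕜 := ℝ) w).symm.trans_le (hA 1 le_rfl hN y)) x
    nlinarith [le_max_left ‖w 0‖ (A 1), le_max_right ‖w 0‖ (A 1), norm_nonneg x]
  refine ⟨∑ i ∈ Finset.range n, n.choose (i + 1) * A (i + 1) * M (n - (i + 1)) +
    max ‖w 0‖ (A 1) * M₀, fun s hs x => ?_⟩
  have hg_s : ContDiff ℝ N fun y => g (s • y) :=
    (hg.comp (contDiff_const_smul s)).of_le (mod_cast le_top)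
  calc ‖iteratedFDeriv ℝ n (fun y => w y * g (s • y)) x‖
      ≤ ∑ i ∈ Finset.range (n + 1), n.choose i * ‖iteratedFDeriv ℝ i w x‖ *
          ‖iteratedFDeriv ℝ (n - i) (fun y => g (s • y)) x‖ :=
        norm_iteratedFDeriv_mul_le hw hg_s x (mod_cast hnN)
    _ = ∑ i ∈ Finset.range n, n.choose (i + 1) * ‖iteratedFDeriv ℝ (i + 1) w x‖ *
          ‖iteratedFDeriv ℝ (n - (i + 1)) (fun y => g (s • y)) x‖ +
        ‖w x‖ * ‖iteratedFDeriv ℝ n (fun y => g (s • y)) x‖ := by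
        rw [Finset.sum_range_succ']
        simp
    _ ≤ _ := by
        refine add_le_add (Finset.sum_le_sum fun i hi => ?_) ?_
        · have hAi := hA (i + 1) (by omega) (by simp at hi; omega) x
          exact mul_le_mul (mul_le_mul_of_nonneg_left hAi (Nat.cast_nonneg _)) (hM _ s hs x)
            (norm_nonneg _) (mul_nonneg (Nat.cast_nonneg _) ((norm_nonneg _).trans hAi))
        · calc ‖w x‖ * ‖iteratedFDeriv ℝ n (fun y => g (s • y)) x‖
              ≤ max ‖w 0‖ (A 1) * (1 + ‖x‖) * ‖iteratedFDeriv ℝ n (fun y => g (s • y)) x‖ := by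
                gcongr; exact h_growth x
            _ ≤ max ‖w 0‖ (A 1) * M₀ := by
                rw [mul_assoc]; gcongr; exact hM₀ s hs x

end

theorem abs_pow_mul_exp_neg_sq_le (k : ℕ) (t : ℝ) : |t| ^ k * exp (-t ^ 2) ≤ 1 + k ! := by
  have h_even : (t ^ 2) ^ k * exp (-t ^ 2) ≤ k ! := by
    have := pow_div_factorial_le_exp _ (sq_nonneg t) k
    rw [div_le_iff₀ (by positivity)] at this
    rw [exp_neg, ← div_eq_mul_inv, div_le_iff₀ (exp_pos _)]
    linarith
  have h_am_gm : |t| ^ k ≤ 1 + (t ^ 2) ^ k := by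
    rw [← sq_abs, ← pow_mul, mul_comm, pow_mul]
    nlinarith [sq_nonneg (|t| ^ k - 1)]
  calc |t| ^ k * exp (-t ^ 2) ≤ (1 + (t ^ 2) ^ k) * exp (-t ^ 2) := by gcongr
    _ = exp (-t ^ 2) + (t ^ 2) ^ k * exp (-t ^ 2) := by ring
    _ ≤ 1 + k ! := add_le_add (exp_le_one_iff.mpr (by nlinarith)) h_even

theorem Polynomial.exists_abs_eval_mul_exp_neg_sq_le (P : ℝ[X]) :
    ∃ C, ∀ t, |P.eval t| * exp (-t ^ 2) ≤ C := by
  induction P using Polynomial.induction_on' with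
  | add P Q hP hQ =>
    obtain ⟨C, hC⟩ := hP
    obtain ⟨D, hD⟩ := hQ
    refine ⟨C + D, fun t => ?_⟩
    calc |(P + Q).eval t| * exp (-t ^ 2)
        ≤ |P.eval t| * exp (-t ^ 2) + |Q.eval t| * exp (-t ^ 2) := by
          rw [eval_add, ← add_mul]; gcongr; exact abs_add_le _ _
      _ ≤ C + D := add_le_add (hC t) (hD t)
  | monomial k a =>
    refine ⟨|a| * (1 + k !), fun t => ?_⟩
    rw [eval_monomial, abs_mul, abs_pow, mul_assoc]
    gcongr
    exact abs_pow_mul_exp_neg_sq_le k t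

theorem Polynomial.hasDerivAt_eval_mul_exp_neg_sq (P : ℝ[X]) (t : ℝ) :
    HasDerivAt (fun t => P.eval t * exp (-t ^ 2))
      ((derivative P - C 2 * X * P).eval t * exp (-t ^ 2)) t := by
  refine ((P.hasDerivAt t).fun_mul (hasDerivAt_pow 2 t).fun_neg.exp).congr_deriv ?_
  simp only [eval_sub, eval_mul, eval_C, eval_X]
  ring

theorem exists_iteratedDeriv_exp_neg_sq_eq (n : ℕ) :
    ∃ P : ℝ[X], iteratedDeriv n (fun t => exp (-t ^ 2)) = fun t => P.eval t * exp (-t ^ 2) := by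
  induction n with
  | zero => exact ⟨1, by simp⟩
  | succ n ih =>
    obtain ⟨P, hP⟩ := ih
    refine ⟨derivative P - C 2 * X * P, ?_⟩
    rw [iteratedDeriv_succ, hP]
    exact funext fun t => (P.hasDerivAt_eval_mul_exp_neg_sq t).deriv

theorem contDiff_exp_neg_sq : ContDiff ℝ ∞ fun t : ℝ => exp (-t ^ 2) := by
  fun_prop

theorem derivsDecay_exp_neg_sq : DerivsDecay fun t : ℝ => exp (-t ^ 2) := by
  intro n
  obtain ⟨P, hP⟩ := exists_iteratedDeriv_exp_neg_sq_eq n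
  obtain ⟨C₁, hC₁⟩ := P.exists_abs_eval_mul_exp_neg_sq_le
  obtain ⟨C₂, hC₂⟩ := (X * P).exists_abs_eval_mul_exp_neg_sq_le
  refine ⟨C₁ + C₂, fun t => ?_⟩
  have h₂ := hC₂ t
  rw [eval_mul, eval_X, abs_mul] at h₂
  rw [norm_iteratedFDeriv_eq_norm_iteratedDeriv, hP, norm_mul, Real.norm_eq_abs, Real.norm_eq_abs,
    Real.norm_eq_abs, abs_of_pos (exp_pos _)]
  linarith [hC₁ t]

theorem derivsDecay_exp_neg_sq_add_sq :
    DerivsDecay fun q : ℝ × ℝ => exp (-(q.1 ^ 2 + q.2 ^ 2)) := by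
  have h := DerivsDecay.prod_mul contDiff_exp_neg_sq contDiff_exp_neg_sq
    derivsDecay_exp_neg_sq derivsDecay_exp_neg_sq
  simpa only [← exp_add, neg_add] using h

theorem exp_neg_mul_sq_add_sq_eq {l : ℝ} (hl : 0 ≤ l) (q : ℝ × ℝ) :
    exp (-l * (q.1 ^ 2 + q.2 ^ 2)) = exp (-((√l • q).1 ^ 2 + (√l • q).2 ^ 2)) := by
  simp only [Prod.smul_fst, Prod.smul_snd, smul_eq_mul, mul_pow, sq_sqrt hl]
  ring_nf

/-- If `w : ℝ² → ℝ` is `C³` with all partial derivatives of orders 1, 2, 3 bounded, then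
the Gaussian-truncated weights `w_λ(x,y) = w(x,y) e^{−λ(x²+y²)}`, `λ ∈ (0,1)`, have all
their derivatives of orders 1, 2, 3 bounded uniformly in `λ`. -/
theorem truncated_weight_derivatives_bounded (w : ℝ × ℝ → ℝ) (hw : ContDiff ℝ 3 w)
    (h1 : ∃ C : ℝ, ∀ p : ℝ × ℝ, ‖iteratedFDeriv ℝ 1 w p‖ ≤ C)
    (h2 : ∃ C : ℝ, ∀ p : ℝ × ℝ, ‖iteratedFDeriv ℝ 2 w p‖ ≤ C)
    (h3 : ∃ C : ℝ, ∀ p : ℝ × ℝ, ‖iteratedFDeriv ℝ 3 w p‖ ≤ C) :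
    ∃ c₁ c₂ c₃ : ℝ, 0 < c₁ ∧ 0 < c₂ ∧ 0 < c₃ ∧
      ∀ l : ℝ, l ∈ Set.Ioo (0 : ℝ) 1 →
        (∀ p : ℝ × ℝ,
            ‖iteratedFDeriv ℝ 1 (fun q : ℝ × ℝ => w q * Real.exp (-l * (q.1 ^ 2 + q.2 ^ 2))) p‖
              ≤ c₁) ∧
        (∀ p : ℝ × ℝ,
            ‖iteratedFDeriv ℝ 2 (fun q : ℝ × ℝ => w q * Real.exp (-l * (q.1 ^ 2 + q.2 ^ 2))) p‖
              ≤ c₂) ∧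
        (∀ p : ℝ × ℝ,
            ‖iteratedFDeriv ℝ 3 (fun q : ℝ × ℝ => w q * Real.exp (-l * (q.1 ^ 2 + q.2 ^ 2))) p‖
              ≤ c₃) := by
  have hw_bdd : ∀ k, 1 ≤ k → k ≤ 3 → ∃ A, ∀ p, ‖iteratedFDeriv ℝ k w p‖ ≤ A := by
    intro k hk₁ hk₃
    interval_cases k <;> assumption
  have bound (n : ℕ) (hn : n ≠ 0) (hn₃ : n ≤ 3) : ∃ c, 0 < c ∧ ∀ l ∈ Ioo (0 : ℝ) 1, ∀ p,
      ‖iteratedFDeriv ℝ n (fun q : ℝ × ℝ => w q * exp (-l * (q.1 ^ 2 + q.2 ^ 2))) p‖ ≤ c := by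
    obtain ⟨C, hC⟩ := exists_norm_iteratedFDeriv_mul_comp_smul_le hw hw_bdd (by fun_prop)
      derivsDecay_exp_neg_sq_add_sq hn hn₃
    refine ⟨max C 1, lt_max_of_lt_right one_pos, fun l hl p => ?_⟩
    simp only [exp_neg_mul_sq_add_sq_eq hl.1.le]
    exact (hC √l ⟨sqrt_nonneg l, sqrt_le_one.mpr hl.2.le⟩ p).trans (le_max_left _ _)
  obtain ⟨c₁, hc₁, hb₁⟩ := bound 1 one_ne_zero (by norm_num)
  obtain ⟨c₂, hc₂, hb₂⟩ := bound 2 two_ne_zero (by norm_num)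
  obtain ⟨c₃, hc₃, hb₃⟩ := bound 3 three_ne_zero le_rfl
  exact ⟨c₁, c₂, c₃, hc₁, hc₂, hc₃, fun l hl => ⟨hb₁ l hl, hb₂ l hl, hb₃ l hl⟩⟩
end
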